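/- For any t ∈ (0,1], μ ≥ 1, and α > 0, [ln(1+tμ) − ln(1+t)] / [ln(1+t) − ln(1+t/μ)] ≥ ((1+tμ)/(μ+t))^{2α} whenever μ > 1 (so the denominator is positive). -/

import Mathlib

/-! The left side is a power of a number in `[0, 1]` with a positive exponent, so it is at most `1`.
The right side is at least `1` because `(1 + t)² ≤ (1 + tμ)(1 + t/μ)` (AM–GM: `μ + 1/μ ≥ 2`),
i.e. `log (1 + t)` lies below the average of `log (1 + tμ)` and `log (1 + t/μ)`. -/

open Real

lemma one_add_mul_div_add_le_one {t μ : ℝ} (ht : 0 ≤ t) (ht1 : t ≤ 1) (hμ : 1 ≤ μ) :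
    (1 + t * μ) / (μ + t) ≤ 1 := by
  rw [div_le_one (by linarith)]
  nlinarith [mul_nonneg (sub_nonneg.2 hμ) (sub_nonneg.2 ht1)]

lemma sq_one_add_le_one_add_mul_mul_one_add_div {t μ : ℝ} (ht : 0 ≤ t) (hμ : 0 < μ) :
    (1 + t) ^ 2 ≤ (1 + t * μ) * (1 + t / μ) := by
  have hexpand : (1 + t * μ) * (1 + t / μ) - (1 + t) ^ 2 = t * (μ - 1) ^ 2 / μ := by
    field_simp
    ring
  have : 0 ≤ t * (μ - 1) ^ 2 / μ := by positivity
  linarith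

lemma log_one_add_sub_log_one_add_div_le {t μ : ℝ} (ht : 0 ≤ t) (hμ : 0 < μ) :
    log (1 + t) - log (1 + t / μ) ≤ log (1 + t * μ) - log (1 + t) := by
  have hlog := log_le_log (by positivity) (sq_one_add_le_one_add_mul_mul_one_add_div ht hμ)
  rw [log_pow, log_mul (by positivity) (by positivity)] at hlog
  push_cast at hlog
  linarith

lemma log_one_add_div_lt {t μ : ℝ} (ht : 0 < t) (hμ : 1 < μ) :
    log (1 + t / μ) < log (1 + t) :=
  log_lt_log (by positivity) (by gcongr; exact div_lt_self ht hμ)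

theorem log_ratio_ge_rpow (t μ α : ℝ) (ht : 0 < t) (ht1 : t ≤ 1) (hμ : 1 < μ) (hα : 0 < α) :
    ((1 + t * μ) / (μ + t)) ^ (2 * α) ≤
      (Real.log (1 + t * μ) - Real.log (1 + t)) /
        (Real.log (1 + t) - Real.log (1 + t / μ)) := by
  have hμ0 : 0 < μ := zero_lt_one.trans hμ
  have hden : 0 < log (1 + t) - log (1 + t / μ) := sub_pos.mpr (log_one_add_div_lt ht hμ)
  calc ((1 + t * μ) / (μ + t)) ^ (2 * α) ≤ 1 :=
        rpow_le_one (by positivity) (one_add_mul_div_add_le_one ht.le ht1 hμ.le) (by positivity)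
    _ ≤ _ := (one_le_div hden).mpr (log_one_add_sub_log_one_add_div_le ht.le hμ0)
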